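/- Let K be a right quasi-field, and f a translation of the affine plane K² with f(0,0) = (v,0) for some v ≠ 0. Then f(a,b) = (a+v, b) for all (a,b) ∈ K². -/

import Mathlib

/-- Two lines are parallel if they are equal or disjoint. -/
def Parallel {P : Type*} (l m : Set P) : Prop := l = m ∨ l ∩ m = ∅

/-- A translation: an automorphism taking each line to a parallel line and
preserving every line of some parallel class. -/
def IsTranslation {P : Type*} (L : Set (Set P)) (f : P → P) : Prop :=
  Function.Bijective f ∧
  (∀ l ∈ L, f '' l ∈ L) ∧
  (∀ l ∈ L, Parallel (f '' l) l) ∧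
  (∃ l₀ ∈ L, ∀ l ∈ L, Parallel l l₀ → f '' l = l)

/-- A right quasi-field: abelian additive group, VW2, VW3, right distributivity,
and unique solvability of xa = xa' + b for a ≠ a'. -/
def IsRightQuasifield {K : Type*} [AddCommGroup K] (mul : K → K → K) (one : K) : Prop :=
  one ≠ 0 ∧
  (∀ a b : K, a ≠ 0 → b ≠ 0 →
    (∃! x, mul a x = b) ∧ (∃! x, mul x a = b) ∧
    (∀ x, mul a x = b → x ≠ 0) ∧ (∀ x, mul x a = b → x ≠ 0) ∧ mul a b ≠ 0) ∧
  (∀ x : K, mul one x = x ∧ mul x one = x ∧ mul 0 x = 0 ∧ mul x 0 = 0) ∧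
  (∀ a x y : K, mul (x + y) a = mul x a + mul y a) ∧
  (∀ a a' b : K, a ≠ a' → ∃! x, mul x a = mul x a' + b)

/-- The lines of the affine plane K²: vertical lines x = c and lines y = ax + b. -/
def qLines {K : Type*} [AddCommGroup K] (mul : K → K → K) : Set (Set (K × K)) :=
  {S | (∃ c, S = {p : K × K | p.1 = c}) ∨ (∃ a b, S = {p : K × K | p.2 = mul a p.1 + b})}

/-!
The fixed parallel class of the translation contains the line through `(0,0)` and `(v,0)`, which
is the horizontal axis, so every horizontal line is fixed and `f` preserves the second coordinate.
Vertical lines go to vertical lines, so `f (a, b) = (g a, b)`. The image of the diagonal `y = x`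
is a line through `(v,0)` disjoint from the diagonal; right distributivity makes every line
`y = M x + C` with `M ≠ 1` meet the diagonal, so the image is `y = x - v`, i.e. `g a = a + v`.
-/

section

variable {K : Type*}

def verticalLine (c : K) : Set (K × K) := {p | p.1 = c}

@[simp]
lemma mem_verticalLine {c : K} {p : K × K} : p ∈ verticalLine c ↔ p.1 = c := Iff.rfl

lemma parallel_of_inter_nonempty_imp {P : Type*} {l m : Set P}
    (h : (l ∩ m).Nonempty → l = m) : Parallel l m := by
  by_cases hlm : (l ∩ m).Nonempty
  · exact Or.inl (h hlm)
  · exact Or.inr (Set.not_nonempty_iff_eq_empty.mp hlm)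

lemma parallel_verticalLine (c c' : K) : Parallel (verticalLine c) (verticalLine c') :=
  parallel_of_inter_nonempty_imp fun ⟨_, hc, hc'⟩ => by rw [← mem_verticalLine.mp hc, hc']

variable [AddCommGroup K] {mul : K → K → K} {one : K}

def graphLine (mul : K → K → K) (a b : K) : Set (K × K) := {p | p.2 = mul a p.1 + b}

@[simp]
lemma mem_graphLine {a b : K} {p : K × K} : p ∈ graphLine mul a b ↔ p.2 = mul a p.1 + b :=
  Iff.rfl

namespace IsRightQuasifield

lemma one_mul (hQ : IsRightQuasifield mul one) (x : K) : mul one x = x := (hQ.2.2.1 x).1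

lemma zero_mul (hQ : IsRightQuasifield mul one) (x : K) : mul 0 x = 0 := (hQ.2.2.1 x).2.2.1

lemma mul_zero (hQ : IsRightQuasifield mul one) (x : K) : mul x 0 = 0 := (hQ.2.2.1 x).2.2.2

lemma mul_ne_zero (hQ : IsRightQuasifield mul one) {a b : K} (ha : a ≠ 0) (hb : b ≠ 0) :
    mul a b ≠ 0 :=
  (hQ.2.1 a b ha hb).2.2.2.2

lemma exists_mul_eq (hQ : IsRightQuasifield mul one) {a b : K} (ha : a ≠ 0) (hb : b ≠ 0) :
    ∃ x, mul a x = b :=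
  (hQ.2.1 a b ha hb).1.exists

lemma sub_one_mul (hQ : IsRightQuasifield mul one) (a x : K) :
    mul (a - one) x = mul a x - x := by
  have h := hQ.2.2.2.1 x (a - one) one
  rw [sub_add_cancel, hQ.one_mul] at h
  exact eq_sub_of_add_eq h.symm

lemma exists_mul_add_eq_self (hQ : IsRightQuasifield mul one) {M : K} (hM : M ≠ one) (C : K) :
    ∃ x, mul M x + C = x := by
  by_cases hC : C = 0
  · exact ⟨0, by rw [hC, hQ.mul_zero, add_zero]⟩
  obtain ⟨x, hx⟩ := hQ.exists_mul_eq (sub_ne_zero.mpr hM) (neg_ne_zero.mpr hC)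
  refine ⟨x, ?_⟩
  rw [hQ.sub_one_mul] at hx
  rw [← neg_neg C, ← hx]
  abel

end IsRightQuasifield

lemma mem_qLines_iff {l : Set (K × K)} :
    l ∈ qLines mul ↔ (∃ c, l = verticalLine c) ∨ ∃ a b, l = graphLine mul a b :=
  Iff.rfl

lemma verticalLine_mem_qLines (c : K) : verticalLine c ∈ qLines mul := Or.inl ⟨c, rfl⟩

lemma graphLine_mem_qLines (a b : K) : graphLine mul a b ∈ qLines mul := Or.inr ⟨a, b, rfl⟩

lemma parallel_graphLine (a b b' : K) : Parallel (graphLine mul a b) (graphLine mul a b') :=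
  parallel_of_inter_nonempty_imp fun ⟨_, hb, hb'⟩ => by
    rw [mem_graphLine, mem_graphLine.mp hb, add_right_inj] at hb'
    rw [hb']

lemma exists_eq_verticalLine_of_parallel [Nontrivial K] {l : Set (K × K)} (hl : l ∈ qLines mul)
    {c : K} (hpar : Parallel l (verticalLine c)) : ∃ c', l = verticalLine c' := by
  rcases mem_qLines_iff.mp hl with hvert | ⟨a, b, rfl⟩
  · exact hvert
  rcases hpar with heq | hdisj
  · obtain ⟨y, y', hyy'⟩ := exists_pair_ne K
    have hy : ((c, y) : K × K) ∈ graphLine mul a b := heq ▸ rfl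
    have hy' : ((c, y') : K × K) ∈ graphLine mul a b := heq ▸ rfl
    exact absurd ((mem_graphLine.mp hy).trans (mem_graphLine.mp hy').symm) hyy'
  · have hmem : ((c, mul a c + b) : K × K) ∈ graphLine mul a b ∩ verticalLine c := ⟨rfl, rfl⟩
    rw [hdisj] at hmem
    exact hmem.elim

lemma eq_graphLine_one_of_disjoint (hQ : IsRightQuasifield mul one) {l : Set (K × K)}
    (hl : l ∈ qLines mul) (hdisj : l ∩ graphLine mul one 0 = ∅) :
    ∃ C, l = graphLine mul one C := by
  have hdiag (x : K) : ((x, x) : K × K) ∈ graphLine mul one 0 := by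
    simp [hQ.one_mul]
  rcases mem_qLines_iff.mp hl with ⟨c, rfl⟩ | ⟨M, C, rfl⟩
  · exact (Set.eq_empty_iff_forall_notMem.mp hdisj (c, c) ⟨rfl, hdiag c⟩).elim
  obtain rfl : M = one := by
    by_contra hM
    obtain ⟨x, hx⟩ := hQ.exists_mul_add_eq_self hM C
    exact Set.eq_empty_iff_forall_notMem.mp hdisj (x, x) ⟨hx.symm, hdiag x⟩
  exact ⟨C, rfl⟩

namespace IsTranslation

variable {f : K × K → K × K}

lemma snd_apply (hQ : IsRightQuasifield mul one) (hf : IsTranslation (qLines mul) f) {v : K}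
    (hv : v ≠ 0) (h0 : f (0, 0) = (v, 0)) (p : K × K) : (f p).2 = p.2 := by
  obtain ⟨-, -, -, l₀, hl₀, hfix⟩ := hf
  rcases mem_qLines_iff.mp hl₀ with ⟨c, rfl⟩ | ⟨a, b₀, rfl⟩
  · have hfix₀ := hfix _ (verticalLine_mem_qLines 0) (parallel_verticalLine 0 c)
    have hv₀ : f (0, 0) ∈ verticalLine 0 := hfix₀ ▸ Set.mem_image_of_mem f rfl
    rw [h0] at hv₀
    exact absurd hv₀ hv
  -- The line of the fixed class through `(0,0)` is fixed, so it passes through `(v,0)`.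
  obtain rfl : a = 0 := by
    have hfix₀ := hfix _ (graphLine_mem_qLines a 0) (parallel_graphLine a 0 b₀)
    have hv₀ : f (0, 0) ∈ graphLine mul a 0 :=
      hfix₀ ▸ Set.mem_image_of_mem f (by simp [hQ.mul_zero])
    rw [h0, mem_graphLine, add_zero] at hv₀
    by_contra ha
    exact hQ.mul_ne_zero ha hv hv₀.symm
  have hfixp := hfix _ (graphLine_mem_qLines 0 p.2) (parallel_graphLine 0 p.2 b₀)
  have hp : f p ∈ graphLine mul 0 p.2 := hfixp ▸ Set.mem_image_of_mem f (by simp [hQ.zero_mul])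
  simpa [hQ.zero_mul] using hp

lemma exists_image_verticalLine [Nontrivial K] (hf : IsTranslation (qLines mul) f) (c : K) :
    ∃ c', f '' verticalLine c = verticalLine c' :=
  exists_eq_verticalLine_of_parallel (hf.2.1 _ (verticalLine_mem_qLines c))
    (hf.2.2.1 _ (verticalLine_mem_qLines c))

lemma image_diagonal (hQ : IsRightQuasifield mul one) (hf : IsTranslation (qLines mul) f)
    {v : K} (hv : v ≠ 0) (h0 : f (0, 0) = (v, 0)) :
    f '' graphLine mul one 0 = graphLine mul one (-v) := by
  have hD := graphLine_mem_qLines (mul := mul) one 0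
  have hvD' : ((v, 0) : K × K) ∈ f '' graphLine mul one 0 :=
    ⟨(0, 0), by simp [hQ.mul_zero], h0⟩
  have hdisj : f '' graphLine mul one 0 ∩ graphLine mul one 0 = ∅ := by
    refine (hf.2.2.1 _ hD).resolve_left fun heq => hv ?_
    have hvD := heq ▸ hvD'
    simpa [hQ.one_mul, eq_comm] using hvD
  obtain ⟨C, hC⟩ := eq_graphLine_one_of_disjoint hQ (hf.2.1 _ hD) hdisj
  rw [hC, mem_graphLine, hQ.one_mul, eq_comm, add_eq_zero_iff_eq_neg'] at hvD'
  rw [hC, hvD']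

end IsTranslation

end

/-- A translation of the plane over a right quasi-field taking (0,0) to (v,0)
with v ≠ 0 is the map (a,b) ↦ (a+v, b). -/
theorem rightQuasifield_horizontal_translation {K : Type*} [AddCommGroup K]
    (mul : K → K → K) (one : K) (hQ : IsRightQuasifield mul one)
    (v : K) (hv : v ≠ 0) (f : K × K → K × K)
    (hf : IsTranslation (qLines mul) f) (h0 : f (0, 0) = (v, 0)) :
    ∀ a b : K, f (a, b) = (a + v, b) := by
  intro a b
  have : Nontrivial K := ⟨⟨v, 0, hv⟩⟩
  obtain ⟨c, hc⟩ := hf.exists_image_verticalLine a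
  have hab : f (a, b) ∈ verticalLine c := hc ▸ Set.mem_image_of_mem f rfl
  have haa : f (a, a) ∈ verticalLine c := hc ▸ Set.mem_image_of_mem f rfl
  have haa_diag : f (a, a) ∈ graphLine mul one (-v) :=
    hf.image_diagonal hQ hv h0 ▸ Set.mem_image_of_mem f (by simp [hQ.one_mul])
  rw [mem_graphLine, hf.snd_apply hQ hv h0, mem_verticalLine.mp haa, hQ.one_mul] at haa_diag
  rw [mem_verticalLine] at hab
  ext
  · rw [hab, show a = c + -v from haa_diag, neg_add_cancel_right]
  · exact hf.snd_apply hQ hv h0 _
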